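/- arXiv:math/0611600 — 2 statements merged into one kernel-verified Lean document; each statement's English description precedes it below -/
import Mathlib

section
/- In a C*-algebra, if U is a normal element and a commutes with U, then a commutes with U* (Fuglede–Putnam theorem). Consequently, the set {a : [U,a] = 0} equals the set {a : [U,a] = 0 and [U*,a] = 0}. -/
open NormedSpace Metric Set

private theorem fp_aux {A : Type*} [NormedRing A] [StarRing A]
    [CStarRing A] [CompleteSpace A] [NormedAlgebra ℂ A] [StarModule ℂ A]
    (U : A) (hU : IsStarNormal U) (a : A) (h : a * U = U * a) :
    a * star U = star U * a := by
  let +nondep : NormedAlgebra ℚ A := NormedAlgebra.restrictScalars ℚ ℂ A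
  have hcomm : Commute a U := h
  have hUU : Commute U (star U) := hU.star_comm_self.symm
  set x := star U with hx
  -- the entire function
  set g : ℂ → A := fun z => exp (z • x) * a * exp (-(z • x)) with hg
  have d1 : Differentiable ℂ (fun z : ℂ => exp (z • x)) :=
    fun z => (hasDerivAt_exp_smul_const x z).differentiableAt
  have d2 : Differentiable ℂ (fun z : ℂ => exp (-(z • x))) := by
    have : (fun z : ℂ => exp (-(z • x))) = fun z : ℂ => exp (z • (-x)) := by
      funext z; rw [smul_neg]
    rw [this]
    exact fun z => (hasDerivAt_exp_smul_const (-x) z).differentiableAt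
  have hdiff : Differentiable ℂ g := (d1.mul (differentiable_const a)).mul d2
  -- rewrite g z as (unitary) * a * (unitary)⋆
  have key : ∀ z : ℂ, g z = a := by
    have hbdd : ∀ z : ℂ, ‖g z‖ ≤ ‖a‖ := by
      intro z
      set c : ℂ := starRingEnd ℂ z with hc
      set s : A := z • x - c • U with hs
      have hs_skew : s ∈ skewAdjoint A := by
        rw [skewAdjoint.mem_iff]
        simp [hs, hc, hx, star_smul, star_star, neg_sub, Complex.conj_conj]
      have hcomm_sx : Commute (z • x) (c • U) :=
        ((hUU.symm.smul_left z).smul_right c)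
      have he_mem : exp s ∈ unitary A := exp_mem_unitary_of_mem_skewAdjoint hs_skew
      have he1 : exp s = exp (z • x) * exp (-(c • U)) := by
        rw [hs, sub_eq_add_neg, exp_add_of_commute (hcomm_sx.neg_right)]
      have he2 : exp (-s) = exp (c • U) * exp (-(z • x)) := by
        rw [hs, neg_sub, sub_eq_add_neg, exp_add_of_commute (hcomm_sx.symm.neg_right)]
      have hstar : star (exp s) = exp (-s) := by
        rw [star_exp, skewAdjoint.mem_iff.mp hs_skew]
      have ha_comm : Commute a (exp (c • U)) := (hcomm.smul_right c).exp_right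
      have hinv : exp (-(c • U)) * exp (c • U) = 1 := by
        rw [← exp_add_of_commute ((Commute.refl (c • U)).neg_left), neg_add_cancel, exp_zero]
      have : exp s * a * star (exp s) = g z := by
        rw [hstar, he1, he2, hg]
        calc exp (z • x) * exp (-(c • U)) * a * (exp (c • U) * exp (-(z • x)))
            = exp (z • x) * (exp (-(c • U)) * (a * exp (c • U)) * exp (-(z • x))) := by
              noncomm_ring
          _ = exp (z • x) * (exp (-(c • U)) * (exp (c • U) * a) * exp (-(z • x))) := by
              rw [ha_comm.eq]
          _ = exp (z • x) * a * exp (-(z • x)) := by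
              rw [← mul_assoc (exp (-(c • U))), hinv, one_mul, mul_assoc]
      rw [← this]
      refine le_of_eq ?_
      calc ‖exp s * a * star (exp s)‖
          = ‖exp s * (a * star (exp s))‖ := by rw [mul_assoc]
        _ = ‖a * star (exp s)‖ := CStarRing.norm_mem_unitary_mul _ he_mem
        _ = ‖a‖ := CStarRing.norm_mul_mem_unitary _ (Unitary.star_mem he_mem)
    intro z
    have hb : Bornology.IsBounded (Set.range g) := by
      rw [isBounded_iff_forall_norm_le]
      exact ⟨‖a‖, by rintro y ⟨z, rfl⟩; exact hbdd z⟩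
    have := hdiff.apply_eq_apply_of_bounded hb z 0
    simpa [hg, exp_zero] using this
  -- from g ≡ a, exp(z•x) commutes with a
  have hcomm_exp : ∀ z : ℂ, exp (z • x) * a = a * exp (z • x) := by
    intro z
    have hinv : exp (-(z • x)) * exp (z • x) = 1 := by
      rw [← exp_add_of_commute ((Commute.refl (z • x)).neg_left), neg_add_cancel, exp_zero]
    have := key z
    calc exp (z • x) * a
        = exp (z • x) * a * (exp (-(z • x)) * exp (z • x)) := by rw [hinv, mul_one]
      _ = g z * exp (z • x) := by rw [hg]; noncomm_ring
      _ = a * exp (z • x) := by rw [this]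
  -- differentiate at 0
  have hf : HasDerivAt (fun z : ℂ => exp (z • x) * a) (exp ((0 : ℂ) • x) * x * a) 0 :=
    (hasDerivAt_exp_smul_const x (0 : ℂ)).mul_const a
  have hg' : HasDerivAt (fun z : ℂ => exp (z • x) * a) (a * (exp ((0 : ℂ) • x) * x)) 0 := by
    have : (fun z : ℂ => exp (z • x) * a) = fun z : ℂ => a * exp (z • x) := by
      funext z; exact hcomm_exp z
    rw [this]
    exact (hasDerivAt_exp_smul_const x (0 : ℂ)).const_mul a
  have := hf.unique hg'
  simp only [zero_smul, exp_zero, one_mul, mul_one] at this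
  exact this.symm

theorem fuglede_putnam_and_kernel_eq {A : Type*} [NormedRing A] [StarRing A]
    [CStarRing A] [CompleteSpace A] [NormedAlgebra ℂ A] [StarModule ℂ A]
    (U : A) (hU : IsStarNormal U) :
    (∀ a : A, a * U = U * a → a * star U = star U * a) ∧
    {a : A | U * a - a * U = 0}
      = {a : A | U * a - a * U = 0 ∧ star U * a - a * star U = 0} := by
  refine ⟨fun a h => fp_aux U hU a h, ?_⟩
  ext a
  simp only [Set.mem_setOf_eq, sub_eq_zero]
  exact ⟨fun h1 => ⟨h1, (fp_aux U hU a h1.symm).symm⟩, fun h1 => h1.1⟩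
end

section
/- There is no continuous function g : ℝ² → ℂ, periodic in both variables with period 1 (i.e., g ∈ C(𝕋²)), such that e^{-2πicy} = exp(∫₀¹ g(x,y) dx) for all y, where c is a nonzero integer. Consequently, no nowhere-vanishing smooth function f : ℝ × 𝕋 → ℂ satisfies f(x+1,y) = e^{-2πicy} f(x,y). -/
open Complex

-- integer-valued continuous function with ψ 1 = ψ 0 + c, c ≠ 0 : contradiction
private lemma int_valued_ivt (ψ : ℝ → ℝ) (hψ : Continuous ψ)
    (hint : ∀ y, ∃ n : ℤ, ψ y = n) (c : ℤ) (hc : c ≠ 0) (hstep : ψ 1 = ψ 0 + c) : False := by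
  obtain ⟨n0, h0⟩ := hint 0
  have key : ∃ z, ψ z = n0 + 1/2 ∨ ψ z = n0 - 1/2 := by
    rcases lt_or_gt_of_ne hc with hneg | hpos
    · have hcr : (c : ℝ) ≤ -1 := by exact_mod_cast (by omega : c ≤ -1)
      have := intermediate_value_Icc' (by norm_num : (0:ℝ) ≤ 1) hψ.continuousOn
      have hmem : (n0 : ℝ) - 1/2 ∈ Set.Icc (ψ 1) (ψ 0) := by
        constructor
        · rw [hstep, h0]
          linarith
        · rw [h0]; linarith
      obtain ⟨z, _, hz⟩ := this hmem
      exact ⟨z, Or.inr hz⟩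
    · have : (1 : ℝ) ≤ (c : ℝ) := by exact_mod_cast hpos
      have hmem : (n0 : ℝ) + 1/2 ∈ Set.Icc (ψ 0) (ψ 1) := by
        constructor
        · rw [h0]; linarith
        · rw [hstep, h0]; linarith
      obtain ⟨z, _, hz⟩ := intermediate_value_Icc (by norm_num : (0:ℝ) ≤ 1) hψ.continuousOn hmem
      exact ⟨z, Or.inl hz⟩
  obtain ⟨z, hz⟩ := key
  obtain ⟨m, hm⟩ := hint z
  rcases hz with hz | hz <;> rw [hm] at hz <;>
  · have : (2 : ℝ) * m = 2 * n0 + 1 ∨ (2:ℝ) * m = 2 * n0 - 1 := by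
      first
        | exact Or.inl (by linarith)
        | exact Or.inr (by linarith)
    rcases this with h | h
    · have : (2 * m : ℤ) = 2 * n0 + 1 := by exact_mod_cast h
      omega
    · have : (2 * m : ℤ) = 2 * n0 - 1 := by exact_mod_cast h
      omega

private lemma part1 (c : ℤ) (hc : c ≠ 0) :
    ¬ ∃ g : ℝ × ℝ → ℂ, Continuous g ∧
        (∀ x y : ℝ, g (x + 1, y) = g (x, y)) ∧
        (∀ x y : ℝ, g (x, y + 1) = g (x, y)) ∧
        (∀ y : ℝ, Complex.exp (∫ x in (0:ℝ)..1, g (x, y))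
          = Complex.exp (-2 * Real.pi * I * c * y)) := by
  rintro ⟨g, hg, hgx, hgy, hge⟩
  set h : ℝ → ℂ := fun y => ∫ x in (0:ℝ)..1, g (x, y) with hh_def
  have hh : Continuous h := by
    apply intervalIntegral.continuous_parametric_intervalIntegral_of_continuous'
    exact hg.comp (continuous_snd.prodMk continuous_fst)
  -- for each y, exp (h y + 2πIcy) = 1
  have hne : ∀ y : ℝ, ∃ n : ℤ, h y + 2 * Real.pi * I * c * y = n * (2 * Real.pi * I) := by
    intro y
    rw [← Complex.exp_eq_one_iff, Complex.exp_add, hge y, ← Complex.exp_add]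
    ring_nf
    exact Complex.exp_zero
  set ψ : ℝ → ℝ := fun y => (h y).im / (2 * Real.pi) + c * y with hψ_def
  have hψc : Continuous ψ := by
    apply Continuous.add
    · exact (Complex.continuous_im.comp hh).div_const _
    · exact continuous_const.mul continuous_id
  have hψint : ∀ y, ∃ n : ℤ, ψ y = n := by
    intro y
    obtain ⟨n, hn⟩ := hne y
    refine ⟨n, ?_⟩
    have him : (h y).im + 2 * Real.pi * c * y = n * (2 * Real.pi) := by
      have := congrArg Complex.im hn
      simpa [Complex.add_im, Complex.mul_im, Complex.mul_re] using this
    have hπ : (2 : ℝ) * Real.pi ≠ 0 := by positivity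
    simp only [hψ_def]
    rw [div_add' _ _ _ hπ, div_eq_iff hπ]
    linear_combination him
  have hper : h 1 = h 0 := by
    simp only [hh_def]
    congr 1
    funext x
    simpa using hgy x 0
  have hstep : ψ 1 = ψ 0 + c := by
    simp [hψ_def, hper]
  exact int_valued_ivt ψ hψc hψint c hc hstep


private lemma part2aux (c : ℤ)
    (f : ℝ × ℝ → ℂ) (hf : ContDiff ℝ (⊤ : ℕ∞) f)
    (hfne : ∀ p : ℝ × ℝ, f p ≠ 0)
    (hfy : ∀ x y : ℝ, f (x, y + 1) = f (x, y))
    (hfx : ∀ x y : ℝ, f (x + 1, y) = Complex.exp (-2 * Real.pi * I * c * y) * f (x, y)) :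
    ∃ g : ℝ × ℝ → ℂ, Continuous g ∧
        (∀ x y : ℝ, g (x + 1, y) = g (x, y)) ∧
        (∀ x y : ℝ, g (x, y + 1) = g (x, y)) ∧
        (∀ y : ℝ, Complex.exp (∫ x in (0:ℝ)..1, g (x, y))
          = Complex.exp (-2 * Real.pi * I * c * y)) := by
  have hd : Differentiable ℝ f := hf.differentiable (by simp)
  set D : ℝ × ℝ → ℂ := fun p => fderiv ℝ f p (1, 0) with hD_def
  set g : ℝ × ℝ → ℂ := fun p => D p / f p with hg_def
  -- derivative of the slice
  have hder : ∀ x y : ℝ, HasDerivAt (fun t => f (t, y)) (D (x, y)) x := by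
    intro x y
    have h1 : HasFDerivAt f (fderiv ℝ f (x, y)) (x, y) := (hd _).hasFDerivAt
    have h2 : HasDerivAt (fun t : ℝ => (t, y)) ((1 : ℝ), (0 : ℝ)) x :=
      (hasDerivAt_id x).prodMk (hasDerivAt_const x y)
    exact h1.comp_hasDerivAt x h2
  have hgc : Continuous g := by
    have hDc : Continuous D := (hf.continuous_fderiv (by simp)).clm_apply continuous_const
    exact hDc.div hf.continuous (fun p => hfne p)
  have hDy : ∀ x y : ℝ, D (x, y + 1) = D (x, y) := by
    intro x y
    have h1 := hder x (y + 1)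
    have h2 := hder x y
    have heq : (fun t => f (t, y + 1)) = fun t => f (t, y) := funext fun t => hfy t y
    rw [heq] at h1
    exact h1.unique h2
  have hgy : ∀ x y : ℝ, g (x, y + 1) = g (x, y) := by
    intro x y
    simp only [hg_def, hDy x y, hfy x y]
  have hDx : ∀ x y : ℝ, D (x + 1, y)
      = Complex.exp (-2 * Real.pi * I * c * y) * D (x, y) := by
    intro x y
    have h2' : HasDerivAt (fun t : ℝ => t + 1) 1 x := by
      simpa using (hasDerivAt_id x).add_const 1
    have h1 : HasDerivAt (fun t => f (t + 1, y)) ((1:ℝ) • D (x + 1, y)) x := by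
      exact HasDerivAt.scomp x (hder (x + 1) y) h2'
    rw [one_smul] at h1
    have h1 : HasDerivAt (fun t => f (t + 1, y)) (D (x + 1, y) * 1) x := by
      rw [mul_one]; exact h1
    have heq : (fun t => f (t + 1, y))
        = fun t => Complex.exp (-2 * Real.pi * I * c * y) * f (t, y) :=
      funext fun t => hfx t y
    rw [heq] at h1
    have h2 : HasDerivAt (fun t => Complex.exp (-2 * Real.pi * I * c * y) * f (t, y))
        (Complex.exp (-2 * Real.pi * I * c * y) * D (x, y)) x :=
      (hder x y).const_mul _
    have := h1.unique h2
    rw [mul_one] at this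
    exact this
  have hgx : ∀ x y : ℝ, g (x + 1, y) = g (x, y) := by
    intro x y
    simp only [hg_def, hDx x y, hfx x y]
    rw [mul_div_mul_left _ _ (Complex.exp_ne_zero _)]
  refine ⟨g, hgc, hgx, hgy, ?_⟩
  intro y
  set G : ℝ → ℂ := fun x => g (x, y) with hG_def
  have hGc : Continuous G := hgc.comp (continuous_id.prodMk continuous_const)
  set F : ℝ → ℂ := fun t => ∫ x in (0:ℝ)..t, G x with hF_def
  have hF : ∀ t : ℝ, HasDerivAt F (G t) t := by
    intro t
    exact intervalIntegral.integral_hasDerivAt_right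
      (hGc.intervalIntegrable _ _)
      (hGc.stronglyMeasurable.stronglyMeasurableAtFilter)
      hGc.continuousAt
  set φ : ℝ → ℂ := fun t => f (t, y) * Complex.exp (-(F t)) with hφ_def
  have hφ' : ∀ t : ℝ, HasDerivAt φ 0 t := by
    intro t
    have h1 : HasDerivAt (fun s => Complex.exp (-(F s)))
        (Complex.exp (-(F t)) * (-(G t))) t := (hF t).neg.cexp
    have h2 := (hder t y).mul h1
    have hzero : D (t, y) * Complex.exp (-(F t))
        + f (t, y) * (Complex.exp (-(F t)) * (-(G t))) = 0 := by
      have hGt : f (t, y) * G t = D (t, y) := by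
        have : G t = D (t, y) / f (t, y) := rfl
        rw [this, mul_div_cancel₀ _ (hfne (t, y))]
      rw [show f (t, y) * (Complex.exp (-(F t)) * -G t)
          = -(Complex.exp (-(F t)) * (f (t, y) * G t)) by ring, hGt]
      ring
    rwa [hzero] at h2
  have hconst : φ 1 = φ 0 := by
    have hdiff : Differentiable ℝ φ := fun t => (hφ' t).differentiableAt
    exact is_const_of_deriv_eq_zero hdiff (fun t => (hφ' t).deriv) 1 0
  have hF0 : F 0 = 0 := intervalIntegral.integral_same
  have hf1 : f (1, y) = Complex.exp (-(2 * Real.pi * I * c * y)) * f (0, y) := by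
    have := hfx 0 y
    norm_num at this
    exact this
  have key : Complex.exp (-(2 * Real.pi * I * c * y)) * f (0, y) * Complex.exp (-(F 1))
      = f (0, y) := by
    have := hconst
    simp only [hφ_def, hF0, neg_zero, Complex.exp_zero, mul_one, hf1] at this
    exact this
  have hne0 := hfne (0, y)
  have h3 : (Complex.exp (-(2 * Real.pi * I * c * y)) * Complex.exp (-(F 1))) * f (0, y)
      = 1 * f (0, y) := by linear_combination key
  have h4 := mul_right_cancel₀ hne0 h3
  have h5 : Complex.exp (-(F 1)) * Complex.exp (F 1) = 1 := by
    rw [← Complex.exp_add]; simp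
  have h6 : Complex.exp (F 1) = Complex.exp (-(2 * Real.pi * I * c * y)) := by
    calc Complex.exp (F 1)
        = (Complex.exp (-(2 * Real.pi * I * c * y)) * Complex.exp (-(F 1)))
            * Complex.exp (F 1) := by rw [h4, one_mul]
      _ = Complex.exp (-(2 * Real.pi * I * c * y))
            * (Complex.exp (-(F 1)) * Complex.exp (F 1)) := by ring
      _ = _ := by rw [h5, mul_one]
  show Complex.exp (F 1) = _
  rw [h6, show (-2 * (Real.pi : ℂ) * I * c * y) = -(2 * Real.pi * I * c * y) by ring]

theorem no_continuous_log_of_twisted_periodicity (c : ℤ) (hc : c ≠ 0) :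
    (¬ ∃ g : ℝ × ℝ → ℂ, Continuous g ∧
        (∀ x y : ℝ, g (x + 1, y) = g (x, y)) ∧
        (∀ x y : ℝ, g (x, y + 1) = g (x, y)) ∧
        (∀ y : ℝ, Complex.exp (∫ x in (0:ℝ)..1, g (x, y))
          = Complex.exp (-2 * Real.pi * I * c * y))) ∧
    (¬ ∃ f : ℝ × ℝ → ℂ, ContDiff ℝ (⊤ : ℕ∞) f ∧
        (∀ p : ℝ × ℝ, f p ≠ 0) ∧
        (∀ x y : ℝ, f (x, y + 1) = f (x, y)) ∧
        (∀ x y : ℝ, f (x + 1, y) = Complex.exp (-2 * Real.pi * I * c * y) * f (x, y))) := by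
  refine ⟨part1 c hc, ?_⟩
  rintro ⟨f, hf, hfne, hfy, hfx⟩
  exact part1 c hc (part2aux c f hf hfne hfy hfx)
end
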